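/- arXiv:1905.09592 — 7 statements merged into one kernel-verified Lean document; each statement's English description precedes it below -/
import Mathlib

section
/- Let (n_k) be a strictly increasing sequence of positive integers with n_0 = 1 and n_{k+1} ≤ c·n_k for all k, where c > 1 is a real constant. Then for every λ on the unit circle with λ ≠ 1, there exists k ≥ 0 such that |λ^{n_k} - 1| ≥ 2·sin(π/(c+1)). -/
/-!
Write `λ = exp (±2πis)` with `0 < s ≤ 1/2`, so that `|λ^m - 1| = 2 sin (π ‖m s‖)`, where `‖x‖` is
the distance from `x` to the nearest integer; it suffices to find `k` with `‖n_k s‖ ≥ δ := 1/(c+1)`.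
If there were none, then, since `c δ = 1 - δ`, a term `n_k s ≤ 1 - δ` within `δ` of an integer is
below `δ`, so the next term is at most `c δ = 1 - δ`. Starting from `n_0 s = s ≤ 1/2 ≤ 1 - δ`, all
`n_k s` would stay below `1 - δ`, contradicting `n_k → ∞`.
-/

open Complex Real

theorem abs_sin_pi_mul_eq_sin_pi_mul_abs_sub_round (x : ℝ) :
    |Real.sin (π * x)| = Real.sin (π * |x - round x|) := by
  have hshift : π * x = π * (x - round x) + round x * π := by ring
  have hsign : |((-1 : ℝ)) ^ round x| = 1 := by simp
  have hπ : |π * (x - round x)| ≤ π := by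
    rw [abs_mul, abs_of_pos pi_pos]
    nlinarith [abs_sub_round x, pi_pos]
  rw [hshift, sin_add_int_mul_pi, abs_mul, hsign, one_mul, abs_sin_eq_sin_abs_of_abs_le_pi hπ,
    abs_mul, abs_of_pos pi_pos]

theorem sin_pi_mul_le_sin_pi_mul {a b : ℝ} (ha : 0 ≤ a) (hab : a ≤ b) (hb : b ≤ 1 / 2) :
    Real.sin (π * a) ≤ Real.sin (π * b) := by
  apply sin_le_sin_of_le_of_le_pi_div_two <;> nlinarith [pi_pos]

theorem norm_pow_sub_one_eq_two_mul_abs_sin {z : ℂ} (hz : ‖z‖ = 1) (m : ℕ) :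
    ‖z ^ m - 1‖ = 2 * |Real.sin (π * (m * (|arg z| / (2 * π))))| := by
  have hexp : z ^ m = exp (I * (m * arg z : ℝ)) := by
    conv_lhs => rw [← norm_mul_exp_arg_mul_I z, hz]
    rw [ofReal_one, one_mul, ← Complex.exp_nat_mul]
    push_cast
    ring_nf
  have hhalf : π * (m * (|arg z| / (2 * π))) = |m * arg z / 2| := by
    rw [abs_div, abs_mul, Nat.abs_cast, abs_two]
    field_simp
  rw [hexp, norm_exp_I_mul_ofReal_sub_one, norm_mul, norm_two, Real.norm_eq_abs, hhalf]
  rcases abs_choice (m * arg z / 2) with h | h <;> rw [h]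
  rw [Real.sin_neg, abs_neg]

theorem lt_of_abs_sub_round_lt {x δ : ℝ} (hxδ : x ≤ 1 - δ) (h : |x - round x| < δ) : x < δ := by
  obtain ⟨hlo, hhi⟩ := abs_lt.mp h
  rcases le_or_gt (round x) 0 with hr | hr
  · have : (round x : ℝ) ≤ 0 := by exact_mod_cast hr
    linarith
  · have : (1 : ℝ) ≤ round x := by exact_mod_cast hr
    linarith

theorem exists_le_abs_sub_round_of_le_mul {x : ℕ → ℝ} {c : ℝ} (hc : 0 ≤ c)
    (h0 : x 0 ≤ 1 - 1 / (c + 1)) (hq : ∀ k, x (k + 1) ≤ c * x k)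
    (hunbdd : ∃ k, 1 - 1 / (c + 1) < x k) :
    ∃ k, 1 / (c + 1) ≤ |x k - round (x k)| := by
  by_contra! hnear
  have hle : ∀ k, x k ≤ 1 - 1 / (c + 1) := by
    intro k
    induction k with
    | zero => exact h0
    | succ k ih =>
      calc x (k + 1) ≤ c * x k := hq k
        _ ≤ c * (1 / (c + 1)) := by gcongr; exact lt_of_abs_sub_round_lt ih (hnear k) |>.le
        _ = 1 - 1 / (c + 1) := by field_simp; ring
  obtain ⟨k, hk⟩ := hunbdd
  exact (hle k).not_gt hk

theorem exists_le_abs_natCast_mul_sub_round (n : ℕ → ℕ) {c s : ℝ} (hc : 1 < c)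
    (hmono : StrictMono n) (h0 : n 0 = 1) (hq : ∀ k, (n (k + 1) : ℝ) ≤ c * n k)
    (hs : 0 < s) (hs' : s ≤ 1 / 2) :
    ∃ k, 1 / (c + 1) ≤ |n k * s - round (n k * s)| := by
  have hδ : 1 / 2 ≤ 1 - 1 / (c + 1) := by
    rw [le_sub_comm, div_le_iff₀ (by linarith)]
    linarith
  refine exists_le_abs_sub_round_of_le_mul (x := fun k ↦ n k * s) (by linarith) ?_ ?_ ?_
  · simpa [h0] using hs'.trans hδ
  · intro k
    rw [← mul_assoc]
    exact mul_le_mul_of_nonneg_right (hq k) hs.le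
  · obtain ⟨k, hk⟩ := exists_nat_gt ((1 - 1 / (c + 1)) / s)
    refine ⟨k, (div_lt_iff₀ hs).mp (hk.trans_le ?_)⟩
    exact_mod_cast hmono.le_apply

theorem stmt_0_general (n : ℕ → ℕ) (c : ℝ) (hc : 1 < c)
    (hmono : StrictMono n) (h0 : n 0 = 1)
    (hq : ∀ k, (n (k + 1) : ℝ) ≤ c * n k)
    (lam : ℂ) (hlam : ‖lam‖ = 1) (hne : lam ≠ 1) :
    ∃ k : ℕ, 2 * Real.sin (Real.pi / (c + 1)) ≤ ‖lam ^ n k - 1‖ := by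
  have harg : arg lam ≠ 0 := fun h ↦ hne <| by
    rw [← norm_mul_exp_arg_mul_I lam, hlam, h]
    simp
  set s := |arg lam| / (2 * π)
  have hs : s ≤ 1 / 2 := by
    rw [div_le_iff₀ (by positivity)]
    linarith [abs_arg_le_pi lam]
  obtain ⟨k, hk⟩ := exists_le_abs_natCast_mul_sub_round n hc hmono h0 hq (by positivity) hs
  refine ⟨k, ?_⟩
  rw [norm_pow_sub_one_eq_two_mul_abs_sin hlam, abs_sin_pi_mul_eq_sin_pi_mul_abs_sub_round,
    div_eq_mul_one_div]
  gcongr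
  exact sin_pi_mul_le_sin_pi_mul (by bound) hk (abs_sub_round _)

theorem stmt_0 (n : ℕ → ℕ) (c : ℝ) (hc : 1 < c)
    (hmono : StrictMono n) (h0 : n 0 = 1) (hpos : ∀ k, 0 < n k)
    (hq : ∀ k, (n (k + 1) : ℝ) ≤ c * n k)
    (lam : ℂ) (hlam : ‖lam‖ = 1) (hne : lam ≠ 1) :
    ∃ k : ℕ, 2 * Real.sin (Real.pi / (c + 1)) ≤ ‖lam ^ n k - 1‖ :=
  stmt_0_general n c hc hmono h0 hq lam hlam hne
end

section
/- Let c be a positive integer and set n_k = c^k. Then for μ = e^{2πi/(c+1)} we have sup_{k≥0} |μ^{n_k} - 1| = 2·sin(π/(c+1)). -/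
/-! Since `c ≡ -1 [MOD c + 1]` and `μ` is a `(c + 1)`-th root of unity, `μ ^ (c ^ k)` is `μ` or
`μ ^ c = μ⁻¹` according to the parity of `k`; both lie at distance `2 sin (π / (c + 1))` from `1`,
so the supremum is that of a constant family. -/

open Complex Real

theorem Nat.pow_modEq_pow_mod_two (c k : ℕ) : c ^ k ≡ c ^ (k % 2) [MOD c + 1] := by
  have hsq : c ^ 2 ≡ 1 [MOD c + 1] :=
    Nat.modEq_iff_dvd.mpr ⟨1 - c, by push_cast; ring⟩
  calc c ^ k = (c ^ 2) ^ (k / 2) * c ^ (k % 2) := by rw [← pow_mul, ← pow_add, Nat.div_add_mod]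
    _ ≡ 1 ^ (k / 2) * c ^ (k % 2) [MOD c + 1] := (hsq.pow _).mul_right _
    _ = c ^ (k % 2) := by rw [one_pow, one_mul]

theorem Complex.norm_exp_two_pi_I_div_pow_sub_one (x : ℝ) (m : ℕ) :
    ‖exp (2 * π * I / x) ^ m - 1‖ = 2 * |Real.sin (π * m / x)| := by
  rw [← exp_nat_mul, show (m : ℂ) * (2 * π * I / x) = I * ((2 * π * m / x : ℝ) : ℂ) by
    push_cast; ring, norm_exp_I_mul_ofReal_sub_one, norm_mul, Real.norm_eq_abs, Real.norm_eq_abs,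
    abs_two]
  ring_nf

theorem stmt_1_general (c : ℕ)
    (μ : ℂ) (hμ : μ = Complex.exp (2 * Real.pi * Complex.I / (c + 1))) :
    (⨆ k : ℕ, ‖μ ^ (c ^ k) - 1‖) = 2 * Real.sin (Real.pi / (c + 1)) := by
  have hμ' : μ = exp (2 * π * I / ((c + 1 : ℝ) : ℂ)) := by push_cast; exact hμ
  have hroot : μ ^ (c + 1) = 1 := by
    rw [hμ]; exact_mod_cast (Complex.isPrimitiveRoot_exp (c + 1) c.succ_ne_zero).pow_eq_one
  have hsin_nonneg : 0 ≤ Real.sin (π / (c + 1)) :=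
    Real.sin_nonneg_of_nonneg_of_le_pi (by positivity)
      (div_le_self pi_pos.le (by simp))
  have hterm (k : ℕ) : ‖μ ^ (c ^ k) - 1‖ = 2 * Real.sin (π / (c + 1)) := by
    rw [pow_eq_pow_of_modEq (Nat.pow_modEq_pow_mod_two c k) hroot, hμ',
      norm_exp_two_pi_I_div_pow_sub_one]
    rcases Nat.mod_two_eq_zero_or_one k with h | h
    · simp [h, abs_of_nonneg hsin_nonneg]
    · rw [h, pow_one, show π * c / (c + 1) = π - π / (c + 1) by field_simp; ring,
        Real.sin_pi_sub, abs_of_nonneg hsin_nonneg]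
  simp_rw [hterm]
  exact ciSup_const

theorem stmt_1 (c : ℕ) (hc : 0 < c)
    (μ : ℂ) (hμ : μ = Complex.exp (2 * Real.pi * Complex.I / (c + 1))) :
    (⨆ k : ℕ, ‖μ ^ (c ^ k) - 1‖) = 2 * Real.sin (Real.pi / (c + 1)) :=
  stmt_1_general c μ hμ
end

section
/- Let (n_k) be a sequence of positive integers with n_0 = 1 such that every unimodular λ with sup_{k≥0} |λ^{n_k} - 1| ≤ √2 satisfies λ = 1. Then every nonzero complex number c with Re(c^{n_k}) ≥ 0 for all k ≥ 0 is a nonnegative real number. -/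
/-! Normalise `c` to the unimodular `λ = c / ‖c‖`. Each `λ ^ n k` lies on the unit circle with
nonnegative real part, hence within `√2` of `1`; the hypothesis forces `λ = 1`, i.e. `c = ‖c‖`. -/

namespace Complex

theorem sq_norm_sub_one (z : ℂ) : ‖z - 1‖ ^ 2 = ‖z‖ ^ 2 - 2 * z.re + 1 := by
  simp [← normSq_eq_norm_sq, normSq_sub]
  ring

theorem norm_sub_one_le_sqrt_two {z : ℂ} (hz : ‖z‖ = 1) (hre : 0 ≤ z.re) : ‖z - 1‖ ≤ √2 :=
  Real.le_sqrt_of_sq_le (by rw [sq_norm_sub_one, hz]; linarith)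

theorem norm_div_norm {c : ℂ} (hc : c ≠ 0) : ‖c / ‖c‖‖ = 1 := by
  simp [hc]

theorem re_div_norm_pow_nonneg {c : ℂ} {m : ℕ} (h : 0 ≤ (c ^ m).re) :
    0 ≤ ((c / ‖c‖) ^ m).re := by
  rw [div_pow, ← ofReal_pow, div_ofReal_re]
  positivity

theorem eq_norm_of_div_norm_eq_one {c : ℂ} (h : c / ‖c‖ = 1) : c = ‖c‖ :=
  (div_eq_one_iff_eq fun h0 => by simp [h0] at h).mp h

end Complex

open Complex in
theorem stmt_8_general (n : ℕ → ℕ)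
    (hJ : ∀ lam : ℂ, ‖lam‖ = 1 →
      (∀ k : ℕ, ‖lam ^ n k - 1‖ ≤ Real.sqrt 2) → lam = 1)
    (c : ℂ) (hc : c ≠ 0) (h : ∀ k : ℕ, 0 ≤ (c ^ n k).re) :
    ∃ r : ℝ, 0 ≤ r ∧ c = (r : ℂ) := by
  have hunit := norm_div_norm hc
  have hone : c / ‖c‖ = 1 := hJ _ hunit fun k =>
    norm_sub_one_le_sqrt_two (by rw [norm_pow, hunit, one_pow]) (re_div_norm_pow_nonneg (h k))
  exact ⟨‖c‖, norm_nonneg c, eq_norm_of_div_norm_eq_one hone⟩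

theorem stmt_8 (n : ℕ → ℕ) (h0 : n 0 = 1) (hpos : ∀ k, 0 < n k)
    (hJ : ∀ lam : ℂ, ‖lam‖ = 1 →
      (∀ k : ℕ, ‖lam ^ n k - 1‖ ≤ Real.sqrt 2) → lam = 1)
    (c : ℂ) (hc : c ≠ 0) (h : ∀ k : ℕ, 0 ≤ (c ^ n k).re) :
    ∃ r : ℝ, 0 ≤ r ∧ c = (r : ℂ) :=
  stmt_8_general n hJ c hc h
end

section
/- For the sequence m_k defined by m_0 = 1, m_1 = 3, and m_k = 2^k for k ≥ 2: every unimodular λ with sup_{k≥0} |λ^{m_k} - 1| < √2 satisfies λ = 1, and moreover sup_{k≥0} |i^{m_k} - 1| = √2, so √2 is the Jamison constant of (m_k). -/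
/-!
The powers of 2 from 4 on are the powers of 2 applied to `λ ^ 4`, and `√2 < √3`, so the
hypothesis forces `λ ^ 4 = 1`; among the fourth roots of unity `1, -1, i, -i` only `1` lies at
distance less than `√2` from `1`, and this distance is controlled by `m 0 = 1`. Conversely `i`
is at distance `√2` from `1` and so is `i ^ 3 = -i`, while `i ^ (2 ^ k) = 1` for `k ≥ 2`.
-/

open Complex

namespace Complex

lemma norm_I_sub_one : ‖I - 1‖ = √2 := by
  simp [norm_def, normSq_apply]
  norm_num

lemma norm_neg_I_sub_one : ‖-I - 1‖ = √2 := by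
  simp [norm_def, normSq_apply]
  norm_num

lemma eq_one_or_eq_neg_one_or_eq_I_or_eq_neg_I_of_pow_four_eq_one {z : ℂ} (h : z ^ 4 = 1) :
    z = 1 ∨ z = -1 ∨ z = I ∨ z = -I := by
  have hfactor : (z - 1) * (z + 1) * (z - I) * (z + I) = 0 := by
    linear_combination h + (1 - z ^ 2) * I_sq
  simp only [mul_eq_zero, sub_eq_zero, add_eq_zero_iff_eq_neg] at hfactor
  tauto

lemma eq_one_of_pow_four_eq_one_of_norm_sub_one_lt {z : ℂ} (h4 : z ^ 4 = 1)
    (hz : ‖z - 1‖ < √2) : z = 1 := by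
  have h2 : ‖(-1 : ℂ) - 1‖ = 2 := by norm_num
  have hsqrt : √2 < 2 := by
    rw [Real.sqrt_lt' two_pos]
    norm_num
  rcases eq_one_or_eq_neg_one_or_eq_I_or_eq_neg_I_of_pow_four_eq_one h4 with rfl | rfl | rfl | rfl
  · rfl
  · linarith
  · simp [norm_I_sub_one] at hz
  · simp [norm_neg_I_sub_one] at hz

lemma I_pow_two_pow {k : ℕ} (hk : 2 ≤ k) : I ^ 2 ^ k = 1 := by
  obtain ⟨j, rfl⟩ := Nat.exists_eq_add_of_le' hk
  rw [pow_add, mul_comm, pow_mul]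
  norm_num

end Complex

theorem stmt_9 (m : ℕ → ℕ) (hm0 : m 0 = 1) (hm1 : m 1 = 3)
    (hm : ∀ k, 2 ≤ k → m k = 2 ^ k)
    (h2k : ∀ lam : ℂ, ‖lam‖ = 1 →
      (∀ k : ℕ, ‖lam ^ 2 ^ k - 1‖ < Real.sqrt 3) → lam = 1) :
    (∀ lam : ℂ, ‖lam‖ = 1 →
      (∀ k : ℕ, ‖lam ^ m k - 1‖ < Real.sqrt 2) → lam = 1) ∧
    (⨆ k : ℕ, ‖Complex.I ^ m k - 1‖) = Real.sqrt 2 := by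
  have hsqrt : √2 < √3 := Real.sqrt_lt_sqrt zero_le_two (by norm_num)
  refine ⟨fun lam hlam hs => ?_, ?_⟩
  · have h4 : lam ^ 4 = 1 := by
      refine h2k _ (by simp [hlam]) fun k => ?_
      have hpow : (lam ^ 4) ^ 2 ^ k = lam ^ m (k + 2) := by
        rw [hm _ le_add_self, ← pow_mul, pow_add 2 k 2, mul_comm]
        norm_num
      exact hpow ▸ (hs (k + 2)).trans hsqrt
    exact eq_one_of_pow_four_eq_one_of_norm_sub_one_lt h4 (by simpa [hm0] using hs 0)
  · have hI : ‖I ^ m 0 - 1‖ = √2 := by rw [hm0, pow_one, norm_I_sub_one]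
    have hle : ∀ k, ‖I ^ m k - 1‖ ≤ √2
      | 0 => hI.le
      | 1 => by rw [hm1, pow_succ, I_sq, neg_one_mul, norm_neg_I_sub_one]
      | k + 2 => by simp [hm _ le_add_self, I_pow_two_pow le_add_self]
    exact le_antisymm (ciSup_le hle) (hI ▸ le_ciSup ⟨_, Set.forall_mem_range.2 hle⟩ 0)
end

section
/- Let G be a metrizable topological group with left-invariant metric d, constants a > 0 and K ≥ 1, satisfying the weak Gleason property: if max{d(g^i, e) : 1 ≤ i ≤ n} < a then n·d(g,e) ≤ K·d(g^n, e). Let b > 0 and h ∈ G with max{d(h^i,e) : 1 ≤ i ≤ n} < a and d(h^n, e) < b. Then max{d(h^i,e) : 1 ≤ i ≤ n} ≤ min(a, K·b). -/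
section LeftInvariantDist

variable {G : Type*} [Group G] [PseudoMetricSpace G]
  (hinv : ∀ h g f : G, dist (h * g) (h * f) = dist g f)
include hinv

theorem dist_mul_one_le_of_left_invariant (g f : G) :
    dist (g * f) 1 ≤ dist g 1 + dist f 1 :=
  calc dist (g * f) 1 ≤ dist (g * f) (g * 1) + dist g 1 := by
        simpa only [mul_one] using dist_triangle (g * f) g 1
    _ = dist g 1 + dist f 1 := by rw [hinv, add_comm]

theorem dist_pow_one_le_of_left_invariant (g : G) (n : ℕ) :
    dist (g ^ n) 1 ≤ n * dist g 1 := by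
  induction n with
  | zero => simp
  | succ k ih =>
    calc dist (g ^ (k + 1)) 1 ≤ dist (g ^ k) 1 + dist g 1 := by
          rw [pow_succ]; exact dist_mul_one_le_of_left_invariant hinv _ _
      _ ≤ k * dist g 1 + dist g 1 := by gcongr
      _ = ((k + 1 : ℕ) : ℝ) * dist g 1 := by push_cast; ring

end LeftInvariantDist

theorem stmt_14_general {G : Type*} [Group G] [MetricSpace G]
    (hinv : ∀ h g f : G, dist (h * g) (h * f) = dist g f)
    (a K : ℝ) (hK : 1 ≤ K)
    (gleason : ∀ (g : G) (n : ℕ), 0 < n →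
      (∀ i : ℕ, 1 ≤ i → i ≤ n → dist (g ^ i) 1 < a) →
      (n : ℝ) * dist g 1 ≤ K * dist (g ^ n) 1)
    (b : ℝ) (h : G) (n : ℕ) (hn : 0 < n)
    (hsmall : ∀ i : ℕ, 1 ≤ i → i ≤ n → dist (h ^ i) 1 < a)
    (hend : dist (h ^ n) 1 < b) :
    ∀ i : ℕ, 1 ≤ i → i ≤ n → dist (h ^ i) 1 ≤ min a (K * b) := by
  intro i hi hin
  refine le_min (hsmall i hi hin).le ?_
  calc dist (h ^ i) 1 ≤ i * dist h 1 := dist_pow_one_le_of_left_invariant hinv h i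
    _ ≤ n * dist h 1 := by gcongr
    _ ≤ K * dist (h ^ n) 1 := gleason h n hn hsmall
    _ ≤ K * b := mul_le_mul_of_nonneg_left hend.le (by linarith)

theorem stmt_14 {G : Type*} [Group G] [MetricSpace G]
    (hinv : ∀ h g f : G, dist (h * g) (h * f) = dist g f)
    (a K : ℝ) (ha : 0 < a) (hK : 1 ≤ K)
    (gleason : ∀ (g : G) (n : ℕ), 0 < n →
      (∀ i : ℕ, 1 ≤ i → i ≤ n → dist (g ^ i) 1 < a) →
      (n : ℝ) * dist g 1 ≤ K * dist (g ^ n) 1)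
    (b : ℝ) (hb : 0 < b) (h : G) (n : ℕ) (hn : 0 < n)
    (hsmall : ∀ i : ℕ, 1 ≤ i → i ≤ n → dist (h ^ i) 1 < a)
    (hend : dist (h ^ n) 1 < b) :
    ∀ i : ℕ, 1 ≤ i → i ≤ n → dist (h ^ i) 1 ≤ min a (K * b) :=
  stmt_14_general hinv a K hK gleason b h n hn hsmall hend
end

section
/- Let M be an n×n complex matrix such that sup_{p≥1} ‖M^p - I‖ < 1 in the operator norm. Then M = I. -/
/-!
Summing `(a - 1) * a ^ p = a ^ (p + 1) - a ^ p` over `p < N` gives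
`N • (a - 1) = (a - 1) * ∑_{p<N} (1 - a ^ p) + (a ^ N - 1)`, hence `N ‖a - 1‖ ≤ N C ‖a - 1‖ + C`.
Since `C < 1`, letting `N → ∞` forces `‖a - 1‖ = 0`. Only the norm of a normed ring enters, so the
matrix case is an instance for the operator norm.
-/

theorem nsmul_sub_one_eq_mul_sum_add {R : Type*} [Ring R] (a : R) (N : ℕ) :
    N • (a - 1) = (a - 1) * ∑ p ∈ Finset.range N, (1 - a ^ p) + (a ^ N - 1) := by
  rw [Finset.sum_sub_distrib, mul_sub, mul_geom_sum, Finset.sum_const, Finset.card_range,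
    mul_smul_comm, mul_one, sub_add_cancel]

section NormedRing

variable {A : Type*} [NormedRing A] [NormedSpace ℝ A] {a : A} {C : ℝ}

theorem natCast_mul_norm_sub_one_le (h : ∀ p : ℕ, 1 ≤ p → ‖a ^ p - 1‖ ≤ C) {N : ℕ} (hN : 1 ≤ N) :
    N * ‖a - 1‖ ≤ N * C * ‖a - 1‖ + C := by
  have hpow (p : ℕ) : ‖1 - a ^ p‖ ≤ C := by
    rcases Nat.eq_zero_or_pos p with rfl | hp
    · simpa using (norm_nonneg _).trans (h 1 le_rfl)
    · exact norm_sub_rev (a ^ p) 1 ▸ h p hp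
  calc (N : ℝ) * ‖a - 1‖ = ‖N • (a - 1)‖ := by rw [RCLike.norm_nsmul ℝ, nsmul_eq_mul]
    _ ≤ ‖a - 1‖ * ‖∑ p ∈ Finset.range N, (1 - a ^ p)‖ + ‖a ^ N - 1‖ := by
      rw [nsmul_sub_one_eq_mul_sum_add]
      exact (norm_add_le _ _).trans (add_le_add_left (norm_mul_le _ _) _)
    _ ≤ ‖a - 1‖ * (N * C) + C := by
      gcongr
      · simpa using norm_sum_le_of_le (Finset.range N) fun p _ ↦ hpow p
      · exact h N hN
    _ = N * C * ‖a - 1‖ + C := by ring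

theorem eq_one_of_forall_norm_pow_sub_one_le (hC : C < 1)
    (h : ∀ p : ℕ, 1 ≤ p → ‖a ^ p - 1‖ ≤ C) : a = 1 := by
  by_contra hne
  have hpos : 0 < (1 - C) * ‖a - 1‖ := mul_pos (by linarith) (norm_pos_iff.2 (sub_ne_zero.2 hne))
  obtain ⟨N, hN⟩ := exists_nat_gt (C / ((1 - C) * ‖a - 1‖))
  have hbound := natCast_mul_norm_sub_one_le h (Nat.le_add_left 1 N)
  rw [div_lt_iff₀ hpos] at hN
  push_cast at hbound
  nlinarith [norm_nonneg (a - 1)]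

end NormedRing

theorem stmt_17 (n : ℕ) (M : Matrix (Fin n) (Fin n) ℂ)
    (C : ℝ) (hC : C < 1)
    (h : ∀ p : ℕ, 1 ≤ p → ‖Matrix.toEuclideanCLM (𝕜 := ℂ) (n := Fin n) (M ^ p - 1)‖ ≤ C) :
    M = 1 := by
  have hT : Matrix.toEuclideanCLM (𝕜 := ℂ) (n := Fin n) M = 1 :=
    eq_one_of_forall_norm_pow_sub_one_le hC fun p hp ↦ by simpa using h p hp
  exact (map_eq_one_iff _ Matrix.toEuclideanCLM.injective).1 hT
end

section
/- Let X be a complex Banach space and (T_t)_{t≥0} a C₀-semigroup of bounded operators on X such that sup_{t≥0} ‖T_t - I‖ < 1 and T_1 = I. Then T_t = I for every t ≥ 0. -/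
/-!
For a nonnegative rational `r = p / q`, the operator `A = T r` satisfies `A ^ q = T p = 1` and
`‖A ^ k - 1‖ ≤ C < 1` for all `k`. The average `M = q⁻¹ ∑_{k<q} A ^ k` then satisfies
`‖1 - M‖ ≤ C < 1`, so `M` is invertible, while `M (A - 1) = q⁻¹ (A ^ q - 1) = 0`; hence `A = 1`.
Strong continuity extends `T t = 1` from the rationals to all `t ≥ 0`.
-/

open Finset Set

section PowEqOne

variable {R : Type*} [NormedRing R] [NormedAlgebra ℝ R]

theorem norm_one_sub_average_pow_le {A : R} {q : ℕ} (hq : 0 < q) {C : ℝ}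
    (hpow : ∀ k, ‖A ^ k - 1‖ ≤ C) :
    ‖1 - (q : ℝ)⁻¹ • ∑ k ∈ range q, A ^ k‖ ≤ C := by
  have hq' : (q : ℝ) ≠ 0 := Nat.cast_ne_zero.mpr hq.ne'
  have hsum : 1 - (q : ℝ)⁻¹ • ∑ k ∈ range q, A ^ k = (q : ℝ)⁻¹ • ∑ k ∈ range q, (1 - A ^ k) := by
    rw [sum_sub_distrib, smul_sub, sum_const, card_range, ← Nat.cast_smul_eq_nsmul ℝ, smul_smul,
      inv_mul_cancel₀ hq', one_smul]
  calc ‖1 - (q : ℝ)⁻¹ • ∑ k ∈ range q, A ^ k‖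
      ≤ (q : ℝ)⁻¹ * ∑ k ∈ range q, ‖1 - A ^ k‖ := by
        rw [hsum, norm_smul, norm_inv, Real.norm_natCast]
        gcongr
        exact norm_sum_le _ _
    _ ≤ (q : ℝ)⁻¹ * ∑ _k ∈ range q, C := by
        gcongr with k
        rw [norm_sub_rev]
        exact hpow k
    _ = C := by
        rw [sum_const, card_range, nsmul_eq_mul]
        field_simp

theorem eq_one_of_pow_eq_one_of_norm_pow_sub_one_le [HasSummableGeomSeries R] {A : R} {q : ℕ}
    (hq : 0 < q) (hAq : A ^ q = 1) {C : ℝ} (hC : C < 1) (hpow : ∀ k, ‖A ^ k - 1‖ ≤ C) :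
    A = 1 := by
  set M := (q : ℝ)⁻¹ • ∑ k ∈ range q, A ^ k
  have hM : IsUnit M := by
    simpa using isUnit_one_sub_of_norm_lt_one ((norm_one_sub_average_pow_le hq hpow).trans_lt hC)
  have hMA : M * (A - 1) = 0 := by
    rw [smul_mul_assoc, geom_sum_mul, hAq, sub_self, smul_zero]
  exact sub_eq_zero.mp (hM.mul_right_eq_zero.mp hMA)

end PowEqOne

section Semigroup

variable {M : Type*} [Monoid M] {T : ℝ → M}

theorem map_natCast_mul_eq_pow (hT0 : T 0 = 1)
    (hmul : ∀ s t : ℝ, 0 ≤ s → 0 ≤ t → T (s + t) = T s * T t) {t : ℝ} (ht : 0 ≤ t) (k : ℕ) :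
    T (k * t) = T t ^ k := by
  induction k with
  | zero => simpa using hT0
  | succ k ih =>
    rw [Nat.cast_succ, add_one_mul, hmul _ _ (by positivity) ht, ih, pow_succ]

theorem map_ratCast_pow_den_eq_one (hT0 : T 0 = 1)
    (hmul : ∀ s t : ℝ, 0 ≤ s → 0 ≤ t → T (s + t) = T s * T t) (h1 : T 1 = 1)
    {r : ℚ} (hr : 0 ≤ r) : T r ^ r.den = 1 := by
  have hnum : (r.den : ℝ) * r = ((r.num.toNat : ℕ) : ℝ) := by
    have hnumℚ : (r.den : ℚ) * r = r.num.toNat := by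
      rw [mul_comm, Rat.mul_den_eq_num]
      exact_mod_cast (Int.toNat_of_nonneg (Rat.num_nonneg.mpr hr)).symm
    exact_mod_cast hnumℚ
  rw [← map_natCast_mul_eq_pow hT0 hmul (Rat.cast_nonneg.mpr hr), hnum,
    ← mul_one ((r.num.toNat : ℕ) : ℝ),
    map_natCast_mul_eq_pow hT0 hmul zero_le_one, h1, one_pow]

end Semigroup

theorem eqOn_Ici_of_forall_ratCast {Y : Type*} [TopologicalSpace Y] [T2Space Y] {f : ℝ → Y} {y : Y}
    (hf : ContinuousOn f (Ici 0)) (hrat : ∀ r : ℚ, 0 < r → f r = y) :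
    EqOn f (fun _ => y) (Ici 0) := by
  refine EqOn.of_subset_closure (s := Ioi 0 ∩ range ((↑) : ℚ → ℝ)) ?_ hf continuousOn_const
    (inter_subset_left.trans Ioi_subset_Ici_self) ?_
  · rintro _ ⟨hpos : (0 : ℝ) < _, r, rfl⟩
    exact hrat r (Rat.cast_pos.mp hpos)
  · rw [← closure_Ioi]
    exact closure_minimal (Rat.denseRange_cast.open_subset_closure_inter isOpen_Ioi)
      isClosed_closure

theorem stmt_18 {X : Type*} [NormedAddCommGroup X] [NormedSpace ℂ X] [CompleteSpace X]
    (T : ℝ → X →L[ℂ] X) (hT0 : T 0 = 1)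
    (hmul : ∀ s t : ℝ, 0 ≤ s → 0 ≤ t → T (s + t) = T s * T t)
    (hcont : ∀ x : X, ContinuousOn (fun t => T t x) (Set.Ici (0 : ℝ)))
    (C : ℝ) (hC : C < 1) (hbdd : ∀ t : ℝ, 0 ≤ t → ‖T t - 1‖ ≤ C)
    (h1 : T 1 = 1) :
    ∀ t : ℝ, 0 ≤ t → T t = 1 := by
  have hrat : ∀ r : ℚ, 0 ≤ r → T r = 1 := fun r hr =>
    eq_one_of_pow_eq_one_of_norm_pow_sub_one_le r.den_pos
      (map_ratCast_pow_den_eq_one hT0 hmul h1 hr) hC fun k => by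
        rw [← map_natCast_mul_eq_pow hT0 hmul (Rat.cast_nonneg.mpr hr)]
        exact hbdd _ (by positivity)
  intro t ht
  ext x
  exact eqOn_Ici_of_forall_ratCast (hcont x) (fun r hr => by rw [hrat r hr.le]) ht
end
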